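/- arXiv:2505.18704 — 14 statements merged into one kernel-verified Lean document; each statement's English description precedes it below -/
import Mathlib

section
/- If $X$ is an infinite set, then for every natural number $n$ the set $X^n$ can be partitioned into $n!$ many sets $D_f$ (indexed by permutations $f$ of $\{0,\dots,n-1\}$) such that each $D_f$ meets every product $U_0 \times U_1 \times \cdots \times U_{n-1}$ where each $U_i \subseteq X$ has cardinality $|X|$. -/
open Cardinal Set

private lemma stmt0_aux (X : Type*) [Infinite X] [LinearOrder X]
    (hIic : ∀ a : X, #(Set.Iic a) < #X) :
    ∀ (m : ℕ) (V : Fin m → Set X), (∀ k, #(V k) = #X) →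
      ∃ y : Fin m → X, StrictMono y ∧ ∀ k, y k ∈ V k := by
  intro m
  induction m with
  | zero =>
    intro V _
    exact ⟨Fin.elim0, fun i => i.elim0, fun k => k.elim0⟩
  | succ m ih =>
    intro V hV
    obtain ⟨y, hy, hyV⟩ := ih (fun k => V k.castSucc) (fun k => hV k.castSucc)
    -- find b ∈ V (last) bigger than all y i
    have hb : ∃ b ∈ V (Fin.last m), ∀ i : Fin m, y i < b := by
      rcases Nat.eq_zero_or_pos m with hm | hm
      · subst hm
        have : (V (Fin.last 0)).Nonempty := by
          rw [← Set.nonempty_coe_sort, ← Cardinal.mk_ne_zero_iff, hV (Fin.last 0)]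
          exact Cardinal.mk_ne_zero X
        obtain ⟨b, hb⟩ := this
        exact ⟨b, hb, fun i => i.elim0⟩
      · set t : Fin m := ⟨m - 1, Nat.sub_lt hm Nat.one_pos⟩
        have hsub : ¬ (V (Fin.last m) ⊆ Set.Iic (y t)) := by
          intro h
          exact absurd ((hV (Fin.last m)) ▸ Cardinal.mk_le_mk_of_subset h)
            (not_le.mpr (hIic (y t)))
        obtain ⟨b, hbV, hble⟩ := Set.not_subset.mp hsub
        refine ⟨b, hbV, fun i => lt_of_le_of_lt ?_ (not_le.mp hble)⟩
        exact hy.monotone (by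
          simp only [Fin.le_def, t]
          omega)
    obtain ⟨b, hbV, hbgt⟩ := hb
    refine ⟨Fin.snoc y b, ?_, ?_⟩
    · intro i j hij
      have hi : i ≠ Fin.last m := by
        intro h
        exact absurd hij (not_lt.mpr (h ▸ Fin.le_last j))
      obtain ⟨i', rfl⟩ := Fin.exists_castSucc_eq.mpr hi
      rcases eq_or_ne j (Fin.last m) with hj | hj
      · subst hj
        simpa [Fin.snoc_castSucc, Fin.snoc_last] using hbgt i'
      · obtain ⟨j', rfl⟩ := Fin.exists_castSucc_eq.mpr hj
        simp only [Fin.snoc_castSucc]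
        exact hy (by exact_mod_cast hij)
    · intro k
      refine Fin.lastCases ?_ ?_ k
      · simpa using hbV
      · intro i
        simpa using hyV i

/-- If `X` is an infinite set, then for every natural `n` the power `X^n`
(modelled as `Fin n → X`) can be partitioned into `n!` many sets, indexed by the
permutations of `Fin n`, each of which meets every box `U 0 × ⋯ × U (n-1)` where
each `U i ⊆ X` has cardinality `|X|`. -/
theorem stmt0 (X : Type*) [Infinite X] (n : ℕ) :
    ∃ D : Equiv.Perm (Fin n) → Set (Fin n → X),
      (⋃ f, D f) = Set.univ ∧
      Pairwise (Function.onFun Disjoint D) ∧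
      ∀ f : Equiv.Perm (Fin n), ∀ U : Fin n → Set X,
        (∀ i, #(U i) = #X) → ∃ x ∈ D f, ∀ i, x i ∈ U i := by
  -- pull back a well-order of initial-ordinal type onto X
  obtain ⟨e⟩ : Nonempty (X ≃ (#X).ord.ToType) :=
    Cardinal.eq.mp (Cardinal.mk_ord_toType #X).symm
  letI : LinearOrder X := LinearOrder.lift' (fun a => e a) e.injective
  have hIic : ∀ a : X, #(Set.Iic a) < #X := by
    intro a
    have h1 : #(Set.Iic a) ≤ #(Set.Iio (e a)) + 1 := by
      have : e '' Set.Iic a ⊆ insert (e a) (Set.Iio (e a)) := by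
        rintro _ ⟨x, hx, rfl⟩
        rcases lt_or_eq_of_le (show e x ≤ e a from hx) with h | h
        · exact Set.mem_insert_of_mem _ h
        · simp [h]
      calc #(Set.Iic a) = #(e '' Set.Iic a) :=
            (Cardinal.mk_image_eq e.injective).symm
        _ ≤ #(insert (e a) (Set.Iio (e a)) : Set _) := Cardinal.mk_le_mk_of_subset this
        _ ≤ #(Set.Iio (e a)) + 1 := Cardinal.mk_insert_le
    have h2 : #(Set.Iio (e a)) + 1 < #X := by
      have h3 := Cardinal.mk_Iio_ord_toType (e a)
      exact Cardinal.add_lt_of_lt (Cardinal.aleph0_le_mk X) h3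
        (Cardinal.one_lt_aleph0.trans_le (Cardinal.aleph0_le_mk X))
    exact lt_of_le_of_lt h1 h2
  refine ⟨fun f => {x | Tuple.sort x = f}, ?_, ?_, ?_⟩
  · ext x; simp only [Set.mem_iUnion, Set.mem_univ, iff_true]
    exact ⟨Tuple.sort x, rfl⟩
  · intro f g hfg
    simp only [Function.onFun, Set.disjoint_left]
    rintro x (hx : Tuple.sort x = f) (hx' : Tuple.sort x = g)
    exact hfg (hx ▸ hx')
  · intro f U hU
    obtain ⟨y, hy, hyV⟩ := stmt0_aux X hIic n (fun k => U (f k)) (fun k => hU (f k))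
    refine ⟨fun i => y (f.symm i), ?_, ?_⟩
    · show Tuple.sort _ = f
      symm
      rw [Tuple.eq_sort_iff]
      constructor
      · intro i j hij
        simp only [Function.comp_apply, Equiv.symm_apply_apply]
        exact (hy.monotone hij)
      · intro i j hij hf
        simp only [Function.comp_apply, Equiv.symm_apply_apply] at hf
        exact absurd (hy.injective hf) (ne_of_lt hij)
    · intro i
      simpa using hyV (f.symm i)
end

section
/- If $X$ is an infinite isodyne topological space (i.e. $|X| = \Delta(X)$, where $\Delta(X)$ is the minimum cardinality of a nonempty open subset), then for every natural number $n$ the space $X^n$ (with the product topology) is $n!$-resolvable, i.e. $X^n$ can be partitioned into $n!$ pairwise disjoint dense subsets. -/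
open Cardinal Set Ordinal

section aux
variable {X : Type*}

/-- counting: the non-successors of c form a small set -/
lemma small_below (r : X → X → Prop) [IsWellOrder X r] [Infinite X]
    (h : ord #X = type r) (c : X) : #{x : X | ¬ r c x} < #X := by
  have : {x : X | ¬ r c x} ⊆ {x | r x c} ∪ {c} := by
    intro x hx
    rcases trichotomous_of r x c with h1 | h1 | h1
    · exact Or.inl h1
    · exact Or.inr (by simp [h1])
    · exact absurd h1 hx
  calc #{x : X | ¬ r c x} ≤ #({x | r x c} ∪ {c} : Set X) := mk_le_mk_of_subset this
    _ ≤ #{x | r x c} + #({c} : Set X) := mk_union_le _ _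
    _ = (typein r c).card + 1 := by rw [mk_singleton]; rfl
    _ < #X := by
        have h1 : (typein r c).card < #X := card_typein_lt c h
        have h2 : (1 : Cardinal) < #X := one_lt_aleph0.trans_le (aleph0_le_mk X)
        exact Cardinal.add_lt_of_lt (aleph0_le_mk X) h1 h2

lemma exists_above (r : X → X → Prop) [IsWellOrder X r] [Infinite X]
    (h : ord #X = type r) {S : Set X} (hS : #S = #X) (c : X) :
    ∃ s ∈ S, r c s := by
  by_contra hc
  push_neg at hc
  have : S ⊆ {x : X | ¬ r c x} := fun x hx => hc x hx
  exact absurd (hS ▸ mk_le_mk_of_subset this) (small_below r h c).not_ge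

/-- the key existence lemma -/
lemma exists_mono [TopologicalSpace X] [Infinite X]
    (hiso : ∀ U : Set X, IsOpen U → U.Nonempty → #U = #X)
    (r : X → X → Prop) [IsWellOrder X r] (h : ord #X = type r) :
    ∀ (n : ℕ) (V : Fin n → Set X), (∀ i, IsOpen (V i)) → (∀ i, (V i).Nonempty) →
    ∀ c : X, ∃ y : Fin n → X, (∀ i, y i ∈ V i) ∧
      StrictMono (fun i => typein r (y i)) ∧ ∀ i, r c (y i) := by
  intro n
  induction n with
  | zero => exact fun V _ _ c => ⟨Fin.elim0, fun i => i.elim0, fun i => i.elim0, fun i => i.elim0⟩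
  | succ m IH =>
    intro V hope hne c
    obtain ⟨z, hz, hcz⟩ := exists_above r h (hiso _ (hope 0) (hne 0)) c
    obtain ⟨y, hy1, hy2, hy3⟩ := IH (V ∘ Fin.succ) (fun i => hope _) (fun i => hne _) z
    refine ⟨Fin.cons z y, ?_, ?_, ?_⟩
    · intro i
      induction i using Fin.cases with
      | zero => simpa using hz
      | succ j => simpa using hy1 j
    · intro i j hij
      induction j using Fin.cases with
      | zero => exact absurd hij (Fin.not_lt_zero _)
      | succ b =>
        induction i using Fin.cases with
        | zero =>
          simp only [Fin.cons_zero, Fin.cons_succ]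
          exact (typein_lt_typein r).mpr (hy3 b)
        | succ a =>
          simp only [Fin.cons_succ]
          exact hy2 (Fin.succ_lt_succ_iff.mp hij)
    · intro i
      induction i using Fin.cases with
      | zero => simpa using hcz
      | succ j =>
        simp only [Fin.cons_succ]
        exact IsTrans.trans _ _ _ hcz (hy3 j)

lemma perm_unique (r : X → X → Prop) [IsWellOrder X r] {n : ℕ} {x : Fin n → X}
    {σ τ : Equiv.Perm (Fin n)} (hσ : StrictMono fun i => typein r (x (σ i)))
    (hτ : StrictMono fun i => typein r (x (τ i))) : σ = τ := by
  have hr : Set.range (fun i => typein r (x (σ i))) = Set.range (fun i => typein r (x (τ i))) := by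
    have e1 : (fun i => typein r (x (σ i))) = (fun i => typein r (x i)) ∘ σ := rfl
    have e2 : (fun i => typein r (x (τ i))) = (fun i => typein r (x i)) ∘ τ := rfl
    rw [e1, e2, Set.range_comp, Set.range_comp, σ.range_eq_univ, τ.range_eq_univ]
  haveI : WellFoundedLT (Fin n) := inferInstance
  have heq := (hσ.range_inj hτ).mp hr
  have hinj : Function.Injective fun i => typein r (x (σ i)) := hσ.injective
  have h1 : Function.Injective (fun i => x (σ i)) := fun a b hab => hinj (by simp [hab])
  have hxinj : Function.Injective x := by
    have hx2 : x = (fun i => x (σ i)) ∘ σ.symm := by ext i; simp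
    rw [hx2]; exact h1.comp σ.symm.injective
  refine Equiv.ext fun i => ?_
  exact hxinj (typein_injective r (congrFun heq i))

end aux

/-- If `X` is an infinite isodyne space (every nonempty open set has
cardinality `|X|`), then for every natural `n` the product space `X^n` is
`n!`-resolvable: it can be partitioned into `n!` pairwise disjoint dense subsets. -/
theorem stmt1 (X : Type*) [TopologicalSpace X] [Infinite X]
    (hiso : ∀ U : Set X, IsOpen U → U.Nonempty → #U = #X) (n : ℕ) :
    ∃ D : Fin n.factorial → Set (Fin n → X),
      (⋃ k, D k) = Set.univ ∧
      Pairwise (Function.onFun Disjoint D) ∧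
      ∀ k, Dense (D k) := by
  classical
  obtain ⟨r, wo, hr⟩ := Cardinal.ord_eq X
  have e : Equiv.Perm (Fin n) ≃ Fin n.factorial :=
    Fintype.equivFinOfCardEq (by simp [Fintype.card_perm])
  set P : Equiv.Perm (Fin n) → Set (Fin n → X) :=
    fun σ => {x | StrictMono fun i => typein r (x (σ i))} with hP
  -- density of each P σ
  have hdense : ∀ σ, Dense (P σ) := by
    intro σ
    rw [dense_iff_inter_open]
    intro U hU ⟨a, ha⟩
    obtain ⟨u, hu, hsub⟩ := (isOpen_pi_iff'.mp hU) a ha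
    obtain ⟨c⟩ := ‹Infinite X›.nonempty
    obtain ⟨y, hy1, hy2, _⟩ := exists_mono hiso r hr n (fun j => u (σ j))
      (fun j => (hu _).1) (fun j => ⟨a (σ j), (hu _).2⟩) c
    refine ⟨y ∘ σ.symm, hsub ?_, ?_⟩
    · intro i _
      have := hy1 (σ.symm i)
      simpa using this
    · show StrictMono fun i => typein r ((y ∘ σ.symm) (σ i))
      simpa using hy2
  have hdisj : ∀ σ τ, σ ≠ τ → Disjoint (P σ) (P τ) := by
    intro σ τ hst
    rw [Set.disjoint_left]
    intro x hx1 hx2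
    exact hst (perm_unique r hx1 hx2)
  set R : Set (Fin n → X) := (⋃ σ, P σ)ᶜ with hR
  refine ⟨fun k => P (e.symm k) ∪ (if k = e 1 then R else ∅), ?_, ?_, ?_⟩
  · ext x
    simp only [mem_iUnion, mem_univ, iff_true]
    by_cases hx : x ∈ ⋃ σ, P σ
    · obtain ⟨σ, hσ⟩ := mem_iUnion.mp hx
      exact ⟨e σ, Or.inl (by simpa using hσ)⟩
    · exact ⟨e 1, Or.inr (by rw [if_pos rfl]; exact hx)⟩
  · intro k l hkl
    rw [Function.onFun, Set.disjoint_left]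
    intro x hxk hxl
    have hmem : ∀ {m : Fin n.factorial}, x ∈ P (e.symm m) ∪ (if m = e 1 then R else ∅) →
        x ∈ P (e.symm m) ∨ (m = e 1 ∧ x ∈ R) := by
      intro m hm
      rcases hm with hm | hm
      · exact Or.inl hm
      · by_cases h1 : m = e 1
        · exact Or.inr ⟨h1, by simpa [h1] using hm⟩
        · simp [h1] at hm
    rcases hmem hxk with h1 | ⟨h1, h1'⟩ <;> rcases hmem hxl with h2 | ⟨h2, h2'⟩
    · exact hkl (e.symm.injective (perm_unique r h1 h2))
    · exact absurd (mem_iUnion.mpr ⟨_, h1⟩) h2'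
    · exact absurd (mem_iUnion.mpr ⟨_, h2⟩) h1'
    · exact hkl (h1.trans h2.symm)
  · intro k
    exact (hdense (e.symm k)).mono Set.subset_union_left
end

section
/- The square of an infinite isodyne topological space is resolvable, i.e. can be partitioned into two disjoint dense subsets. -/
open Cardinal Ordinal Set TopologicalSpace

/-!
Well-order `X` in order type `|X|`, the initial ordinal. Every proper initial segment then has
fewer than `|X|` points, so an open set of full cardinality `|X|` (which, `X` being isodyne, is
every nonempty one) is cofinal. Hence every open box `U × V` contains a point `(x, y)` with
`x < y` as well as one with `y < x`, so `{(x, y) | x < y}` and its complement are both dense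
in `X × X`.
-/

section InitialWellOrder

variable {α : Type*} [LinearOrder α] [WellFoundedLT α]

theorem noMaxOrder_of_ord_eq_type_lt [Infinite α] (h : ord #α = typeLT α) : NoMaxOrder α := by
  rw [← isSuccPrelimit_type_lt_iff, ← h]
  exact (isSuccLimit_ord (aleph0_le_mk α)).isSuccPrelimit

theorem not_bddAbove_of_mk_eq [NoMaxOrder α] (h : ord #α = typeLT α) {S : Set α}
    (hS : #S = #α) : ¬BddAbove S := by
  rintro ⟨i, hi⟩
  obtain ⟨j, hij⟩ := exists_gt i
  have hSj : S ⊆ Iio j := fun x hx => (hi hx).trans_lt hij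
  exact (mk_le_mk_of_subset hSj).not_gt (hS ▸ mk_Iio_lt j h)

end InitialWellOrder

theorem dense_iff_forall_prod_inter_nonempty {X Y : Type*} [TopologicalSpace X]
    [TopologicalSpace Y] {s : Set (X × Y)} :
    Dense s ↔ ∀ U V, IsOpen U → IsOpen V → U.Nonempty → V.Nonempty → (U ×ˢ V ∩ s).Nonempty := by
  rw [(isTopologicalBasis_opens.prod isTopologicalBasis_opens).dense_iff]
  constructor
  · exact fun h U V hU hV hUne hVne => h _ ⟨U, hU, V, hV, rfl⟩ (hUne.prod hVne)
  · rintro h _ ⟨U, hU, V, hV, rfl⟩ hne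
    exact h U V hU hV hne.fst hne.snd

section CofinalOpenSets

variable {X : Type*} [TopologicalSpace X] [LinearOrder X]

theorem dense_setOf_fst_lt_snd (hX : ∀ U : Set X, IsOpen U → U.Nonempty → ¬BddAbove U) :
    Dense {p : X × X | p.1 < p.2} := by
  refine dense_iff_forall_prod_inter_nonempty.2 fun U V _ hV ⟨a, ha⟩ hVne => ?_
  obtain ⟨y, hy, hay⟩ := not_bddAbove_iff.1 (hX V hV hVne) a
  exact ⟨(a, y), ⟨ha, hy⟩, hay⟩

theorem dense_compl_setOf_fst_lt_snd (hX : ∀ U : Set X, IsOpen U → U.Nonempty → ¬BddAbove U) :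
    Dense {p : X × X | p.1 < p.2}ᶜ := by
  refine dense_iff_forall_prod_inter_nonempty.2 fun U V hU _ hUne ⟨b, hb⟩ => ?_
  obtain ⟨x, hx, hbx⟩ := not_bddAbove_iff.1 (hX U hU hUne) b
  exact ⟨(x, b), ⟨hx, hb⟩, hbx.asymm⟩

end CofinalOpenSets

/-- The square of an infinite isodyne space is resolvable: `X × X`
is the disjoint union of two dense subsets. -/
theorem stmt2 (X : Type*) [TopologicalSpace X] [Infinite X]
    (hiso : ∀ U : Set X, IsOpen U → U.Nonempty → #U = #X) :
    ∃ D₁ D₂ : Set (X × X), Dense D₁ ∧ Dense D₂ ∧ Disjoint D₁ D₂ ∧ D₁ ∪ D₂ = Set.univ := by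
  obtain ⟨_, _, hX⟩ := exists_ord_eq_type_lt X
  have := noMaxOrder_of_ord_eq_type_lt hX
  have hcofinal (U : Set X) (hU : IsOpen U) (hne : U.Nonempty) : ¬BddAbove U :=
    not_bddAbove_of_mk_eq hX (hiso U hU hne)
  exact ⟨_, _, dense_setOf_fst_lt_snd hcofinal, dense_compl_setOf_fst_lt_snd hcofinal,
    disjoint_compl_right, union_compl_self _⟩
end

section
/- If every nonempty open subset of a topological space $X$ contains a nonempty $\kappa$-resolvable subspace, then $X$ itself is $\kappa$-resolvable. -/
/-!
By Zorn's lemma there is a maximal pairwise disjoint family of nonempty `κ`-resolvable subsets;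
by maximality and the hypothesis its union `S` is dense. Gluing the partitions of its members
gives `κ` disjoint sets, each dense in `S` and hence in `X`, and `Sᶜ` is added to one of them.
-/

open Cardinal Set

/-- A space `Z` is `κ`-resolvable if it admits a partition into `κ` many
pairwise disjoint dense subsets. -/
def KResolvable (κ : Cardinal) (Z : Type*) [TopologicalSpace Z] : Prop :=
  ∃ D : (Quotient.out κ) → Set Z,
    (⋃ i, D i) = Set.univ ∧ Pairwise (Function.onFun Disjoint D) ∧ ∀ i, Dense (D i)

open Function

section DensePartition

variable {X ι : Type*} [TopologicalSpace X]

/-- Pieces are subsets of `X` dense in `S`, so that gluing partitions of different subspaces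
stays inside `X` instead of passing between subspace topologies. -/
def IsDensePartition (S : Set X) (D : ι → Set X) : Prop :=
  ⋃ i, D i = S ∧ Pairwise (Disjoint on D) ∧ ∀ i, S ⊆ closure (D i)

theorem KResolvable.exists_isDensePartition {κ : Cardinal} {S : Set X} (h : KResolvable κ S) :
    ∃ D : κ.out → Set X, IsDensePartition S D := by
  obtain ⟨D, hcover, hdisj, hdense⟩ := h
  refine ⟨fun i => Subtype.val '' D i, ?_, ?_, ?_⟩
  · rw [← image_iUnion, hcover, image_univ, Subtype.range_coe]
  · exact fun i j hij =>
      (hdisj hij).image Subtype.val_injective.injOn (subset_univ _) (subset_univ _)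
  · exact fun i x hx => closure_subtype.1 (hdense i ⟨x, hx⟩)

theorem kResolvable_of_isDensePartition_univ {κ : Cardinal} {D : κ.out → Set X}
    (h : IsDensePartition Set.univ D) : KResolvable κ X :=
  ⟨D, h.1, h.2.1, fun i => dense_iff_closure_eq.2 (univ_subset_iff.1 (h.2.2 i))⟩

theorem IsDensePartition.iUnion {α : Type*} {T : α → Set X} (hT : Pairwise (Disjoint on T))
    {D : α → ι → Set X} (hD : ∀ a, IsDensePartition (T a) (D a)) :
    IsDensePartition (⋃ a, T a) (fun i => ⋃ a, D a i) := by
  have hsub : ∀ a i, D a i ⊆ T a := fun a i => (hD a).1 ▸ subset_iUnion (D a) i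
  refine ⟨?_, fun i j hij => ?_, fun i => ?_⟩
  · rw [iUnion_comm]
    exact iUnion_congr fun a => (hD a).1
  · refine disjoint_iUnion_left.2 fun a => disjoint_iUnion_right.2 fun b => ?_
    rcases eq_or_ne a b with rfl | hab
    · exact (hD a).2.1 hij
    · exact (hT hab).mono (hsub a i) (hsub b j)
  · exact iUnion_subset fun a =>
      ((hD a).2.2 i).trans (closure_mono (subset_iUnion (fun a => D a i) a))

theorem IsDensePartition.exists_univ_of_dense {S : Set X} {D : ι → Set X}
    (h : IsDensePartition S D) (hS : Dense S) :
    ∃ E : ι → Set X, IsDensePartition Set.univ E := by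
  obtain ⟨hcover, hdisj, hdense⟩ := h
  rcases isEmpty_or_nonempty ι with hι | ⟨⟨i₀⟩⟩
  · have : S = Set.univ := by
      rw [← hS.closure_eq, ← hcover, iUnion_of_empty, closure_empty]
    exact ⟨D, this ▸ ⟨hcover, hdisj, hdense⟩⟩
  classical
  have hsub : ∀ i, D i ⊆ S := fun i => hcover ▸ subset_iUnion D i
  have hle : D ≤ update D i₀ (D i₀ ∪ Sᶜ) := by
    intro i
    rcases eq_or_ne i i₀ with rfl | hi
    · simp
    · simp [hi]
  refine ⟨update D i₀ (D i₀ ∪ Sᶜ), ?_, ?_, fun i => ?_⟩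
  · refine eq_univ_of_forall fun x => ?_
    by_cases hx : x ∈ S
    · obtain ⟨i, hi⟩ := mem_iUnion.1 (hcover ▸ hx)
      exact mem_iUnion.2 ⟨i, hle i hi⟩
    · exact mem_iUnion.2 ⟨i₀, by simp [hx]⟩
  · have hD₀ : ∀ j ≠ i₀, Disjoint (D i₀ ∪ Sᶜ) (D j) := fun j hj =>
      disjoint_union_left.2 ⟨hdisj hj.symm, disjoint_compl_left.mono_right (hsub j)⟩
    intro i j hij
    rcases eq_or_ne i i₀ with rfl | hi
    · simpa [onFun, hij.symm] using hD₀ j hij.symm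
    rcases eq_or_ne j i₀ with rfl | hj
    · simpa [onFun, hij] using (hD₀ i hij).symm
    simpa [onFun, hi, hj] using hdisj hij
  · exact fun x _ => dense_closure.1 (hS.mono ((hdense i).trans (closure_mono (hle i)))) x

end DensePartition

theorem exists_pairwiseDisjoint_dense_sUnion {X : Type*} [TopologicalSpace X] {P : Set X → Prop}
    (h : ∀ U : Set X, IsOpen U → U.Nonempty → ∃ S ⊆ U, S.Nonempty ∧ P S) :
    ∃ F : Set (Set X), (∀ T ∈ F, P T) ∧ F.PairwiseDisjoint id ∧ Dense (⋃₀ F) := by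
  obtain ⟨F, ⟨hFP, hFdisj⟩, hFmax⟩ :=
    zorn_subset {F : Set (Set X) | (∀ T ∈ F, P T) ∧ F.PairwiseDisjoint id} fun c hc hchain =>
      ⟨⋃₀ c, ⟨fun T ⟨G, hG, hT⟩ => (hc hG).1 T hT,
        (pairwiseDisjoint_sUnion hchain.directedOn).2 fun G hG => (hc hG).2⟩,
        fun _ => subset_sUnion_of_mem⟩
  refine ⟨F, hFP, hFdisj, ?_⟩
  by_contra hnd
  obtain ⟨T, hTU, ⟨x, hx⟩, hT⟩ := h (closure (⋃₀ F))ᶜ isClosed_closure.isOpen_compl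
    (nonempty_compl.2 (dense_iff_closure_eq.not.1 hnd))
  have hTF : Disjoint T (⋃₀ F) := disjoint_compl_left.mono hTU subset_closure
  have : insert T F ⊆ F := hFmax ⟨forall_mem_insert.2 ⟨hT, hFP⟩,
    hFdisj.insert fun S hS _ => hTF.mono_right (subset_sUnion_of_mem hS)⟩ (subset_insert _ _)
  exact disjoint_left.1 hTF hx (subset_sUnion_of_mem (this (mem_insert _ _)) hx)

/-- If every nonempty open subset of `X` contains a nonempty
`κ`-resolvable subspace, then `X` itself is `κ`-resolvable. -/
theorem stmt4 (κ : Cardinal) (X : Type*) [TopologicalSpace X]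
    (h : ∀ U : Set X, IsOpen U → U.Nonempty →
      ∃ S : Set X, S ⊆ U ∧ S.Nonempty ∧ KResolvable κ S) :
    KResolvable κ X := by
  obtain ⟨F, hFres, hFdisj, hFdense⟩ := exists_pairwiseDisjoint_dense_sUnion h
  choose D hD using fun T : F => (hFres T T.2).exists_isDensePartition
  have hS := IsDensePartition.iUnion (T := ((↑) : F → Set X)) (hFdisj.subtype _ _) hD
  rw [← sUnion_eq_iUnion] at hS
  obtain ⟨E, hE⟩ := hS.exists_univ_of_dense hFdense
  exact kResolvable_of_isDensePartition_univ hE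
end

section
/- For every topological space $X$ and every nonempty open subset $U$ of $X$, there exists a nonempty open subset $V \subseteq U$ such that the subspace $V$ is isodyne, i.e. every nonempty relatively open subset of $V$ has cardinality $|V|$. -/
open Cardinal Set

/-! Cardinals are well-ordered, so `U` contains a nonempty open set `V` of least cardinality.
If `W` is open and meets `V`, then `W ∩ V` is again a nonempty open subset of `U`, so it cannot
be smaller than `V`. -/

theorem exists_isOpen_subset_forall_mk_le {X : Type*} [TopologicalSpace X] {U : Set X}
    (hU : IsOpen U) (hne : U.Nonempty) :
    ∃ V : Set X, IsOpen V ∧ V.Nonempty ∧ V ⊆ U ∧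
      ∀ W : Set X, IsOpen W → W.Nonempty → W ⊆ U → #V ≤ #W := by
  obtain ⟨V, ⟨hVo, hVne, hVU⟩, hmin⟩ :=
    (InvImage.wf (fun V : Set X => #V) Cardinal.lt_wf).has_min
      {V | IsOpen V ∧ V.Nonempty ∧ V ⊆ U} ⟨U, hU, hne, subset_rfl⟩
  exact ⟨V, hVo, hVne, hVU, fun W hWo hWne hWU => not_lt.mp (hmin W ⟨hWo, hWne, hWU⟩)⟩

/-- Every nonempty open set `U` contains a nonempty open set `V` whose
subspace is isodyne: every nonempty relatively open subset of `V` has cardinality `|V|`. -/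
theorem stmt5 (X : Type*) [TopologicalSpace X] (U : Set X) (hU : IsOpen U) (hne : U.Nonempty) :
    ∃ V : Set X, IsOpen V ∧ V.Nonempty ∧ V ⊆ U ∧
      ∀ W : Set X, IsOpen W → (W ∩ V).Nonempty → #(W ∩ V : Set X) = #V := by
  obtain ⟨V, hVo, hVne, hVU, hmin⟩ := exists_isOpen_subset_forall_mk_le hU hne
  refine ⟨V, hVo, hVne, hVU, fun W hW hWV => ?_⟩
  exact le_antisymm (mk_le_mk_of_subset inter_subset_right)
    (hmin _ (hW.inter hVo) hWV (inter_subset_right.trans hVU))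
end

section
/- For infinite cardinals $\kappa, \lambda, \tau$: if $\kappa \times \mathrm{cf}(\lambda)$ can be partitioned into $\tau$ many thick subsets, then $\kappa \times \lambda$ can also be partitioned into $\tau$ many thick subsets. -/
open Cardinal Set

/-- For infinite cardinals `κ, λ, τ`: if `κ × cf(λ)` can be partitioned
into `τ` many thick subsets, then so can `κ × λ`. -/
theorem stmt8 (κ lam τ : Cardinal.{0}) (hκ : ℵ₀ ≤ κ) (hlam : ℵ₀ ≤ lam) (hτ : ℵ₀ ≤ τ)
    (h : ∃ E : (Quotient.out τ) → Set ((Quotient.out κ) × (Quotient.out lam.ord.cof)),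
      (⋃ i, E i) = Set.univ ∧ Pairwise (Function.onFun Disjoint E) ∧
      ∀ i, ∀ M : Set (Quotient.out κ), #M = κ →
        ∀ N : Set (Quotient.out lam.ord.cof), #N = lam.ord.cof →
          (E i ∩ M ×ˢ N).Nonempty) :
    ∃ E : (Quotient.out τ) → Set ((Quotient.out κ) × (Quotient.out lam)),
      (⋃ i, E i) = Set.univ ∧ Pairwise (Function.onFun Disjoint E) ∧
      ∀ i, ∀ M : Set (Quotient.out κ), #M = κ →
        ∀ N : Set (Quotient.out lam), #N = lam →
          (E i ∩ M ×ˢ N).Nonempty := by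
  obtain ⟨E, hU, hD, hT⟩ := h
  -- an equivalence between `lam.out` and the canonical well-ordered type of `lam.ord`
  have hmk : #(Quotient.out lam) = #(lam.ord.ToType) := by
    rw [Cardinal.mk_out, Cardinal.mk_toType, Cardinal.card_ord]
  obtain ⟨e⟩ := Cardinal.eq.mp hmk
  -- an unbounded subset of cardinality `cof`
  haveI : IsWellOrder lam.ord.ToType (· < ·) := isWellOrder_lt
  obtain ⟨S, hSu, hScard⟩ := Order.exists_cof_eq (α := lam.ord.ToType)
  rw [Ordinal.cof_toType] at hScard
  have hmkS : #S = #(Quotient.out lam.ord.cof) := by rw [hScard, Cardinal.mk_out]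
  obtain ⟨eS⟩ := Cardinal.eq.mp hmkS
  -- the pressing-down map
  have hg : ∀ a : lam.ord.ToType, ∃ b : S, a ≤ (b : lam.ord.ToType) := by
    intro a
    obtain ⟨b, hbS, hb⟩ := hSu a
    exact ⟨⟨b, hbS⟩, hb⟩
  choose g hgle using hg
  set f : Quotient.out lam → Quotient.out lam.ord.cof := fun x => eS (g (e x)) with hf
  -- fibers of `f` are small
  have hfiber : ∀ y, #(f ⁻¹' {y}) < lam := by
    intro y
    have hsub : f ⁻¹' {y} ⊆ (fun x => e x) ⁻¹' (Set.Iic (eS.symm y : lam.ord.ToType)) := by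
      intro x hx
      simp only [hf, Set.mem_preimage, Set.mem_singleton_iff] at hx
      have : g (e x) = eS.symm y := by rw [← hx, Equiv.symm_apply_apply]
      have h1 : e x ≤ (g (e x) : lam.ord.ToType) := hgle (e x)
      simpa [Set.mem_Iic, this] using h1
    have h1 : #(f ⁻¹' {y}) ≤ #(Set.Iic (eS.symm y : lam.ord.ToType)) := by
      refine le_trans (Cardinal.mk_le_mk_of_subset hsub) ?_
      exact Cardinal.mk_preimage_of_injective _ _ e.injective
    refine lt_of_le_of_lt h1 ?_
    -- `Iic s` has cardinality `< lam`
    set s := (eS.symm y : lam.ord.ToType) with hs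
    have hIic : Set.Iic s = insert s (Set.Iio s) := by
      ext x; simp [le_iff_lt_or_eq, or_comm]
    rw [hIic]
    refine lt_of_le_of_lt (Cardinal.mk_insert_le) ?_
    refine Cardinal.add_lt_of_lt hlam ?_ (lt_of_lt_of_le Cardinal.one_lt_aleph0 hlam)
    have : #(Set.Iio s) =
        (Ordinal.typein ((· < ·) : lam.ord.ToType → lam.ord.ToType → Prop) s).card := by
      refine Eq.trans ?_ (Ordinal.card_typein s).symm
      rfl
    rw [this, ← Cardinal.lt_ord]
    exact Ordinal.typein_lt_self s
  refine ⟨fun i => Prod.map id f ⁻¹' E i, ?_, ?_, ?_⟩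
  · rw [← Set.preimage_iUnion, hU, Set.preimage_univ]
  · exact fun i j hij => (hD hij).preimage _
  · intro i M hM N hN
    set N' : Set (Quotient.out lam.ord.cof) := f '' N with hN'
    have hN'card : #N' = lam.ord.cof := by
      refine le_antisymm ?_ ?_
      · exact le_of_le_of_eq (Cardinal.mk_set_le N') (Cardinal.mk_out _)
      · by_contra hlt
        push_neg at hlt
        have hcov : N ⊆ ⋃ y : N', f ⁻¹' {(y : Quotient.out lam.ord.cof)} := by
          intro x hx
          exact Set.mem_iUnion.mpr ⟨⟨f x, Set.mem_image_of_mem f hx⟩, rfl⟩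
        have hle : #N ≤ #N' * ⨆ y : N', #(f ⁻¹' {(y : Quotient.out lam.ord.cof)}) :=
          le_trans (Cardinal.mk_le_mk_of_subset hcov) (Cardinal.mk_iUnion_le _)
        have hsup : (⨆ y : N', #(f ⁻¹' {(y : Quotient.out lam.ord.cof)})) < lam :=
          Ordinal.iSup_lt hlt fun y => hfiber _
        have : #N < lam := lt_of_le_of_lt hle
          (Cardinal.mul_lt_of_lt hlam (lt_of_lt_of_le hlt (Ordinal.cof_ord_le lam)) hsup)
        rw [hN] at this
        exact lt_irrefl _ this
    obtain ⟨⟨a, b⟩, habE, haM, hbN'⟩ := hT i M hM N' hN'card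
    obtain ⟨x, hxN, hfx⟩ := hbN'
    refine ⟨(a, x), ?_, haM, hxN⟩
    show Prod.map id f (a, x) ∈ E i
    simpa [Prod.map, hfx] using habE
end

section
/- Kuratowski Lemma: if $\kappa$ is an infinite cardinal and $\mathcal{E}$ is a family of sets with $|\mathcal{E}| \leq \kappa$ and $|A| \geq \kappa$ for every $A \in \mathcal{E}$, then there is a function $f : \bigcup \mathcal{E} \to \kappa$ such that $f[A] = \kappa$ for every $A \in \mathcal{E}$ (i.e. $\mathcal{E}$ is $\kappa$-breakable). -/
/-!
Enumerate the pairs `(A, k) ∈ 𝓔 × κ` in order type `κ`; this is possible since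
`|𝓔 × κ| ≤ κ · κ = κ`. By transfinite recursion pick, for each pair, a point of `A` distinct
from the fewer than `κ` points picked before; this works because `|A| ≥ κ`. Sending the point
picked for `(A, k)` to `k` maps each `A` onto `κ`.
-/

open Cardinal Set Function

def IsBreakable (K : Type*) {X : Type*} (𝓔 : Set (Set X)) : Prop :=
  ∃ f : X → K, ∀ A ∈ 𝓔, f '' A = Set.univ

universe u v

theorem exists_injective_forall_mem_of_lift_mk_Iio_lt {T : Type u} {X : Type v}
    [LinearOrder T] [WellFoundedLT T] (S : T → Set X)
    (hS : ∀ t, lift.{v} #(Iio t) < lift.{u} #(S t)) :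
    ∃ g : T → X, Injective g ∧ ∀ t, g t ∈ S t := by
  have fresh : ∀ t (p : ∀ s < t, X), (S t \ range fun s : Iio t => p s s.2).Nonempty := by
    intro t p
    rw [sdiff_nonempty]
    intro hsub
    exact (mk_range_le_lift.trans_lt (hS t)).not_ge (lift_le.2 (mk_le_mk_of_subset hsub))
  set g : T → X := WellFoundedLT.fix fun t p => (fresh t p).some
  have hg : ∀ t, g t ∈ S t \ range fun s : Iio t => g s := fun t => by
    rw [show g t = _ from WellFoundedLT.fix_eq _ t]
    exact (fresh t fun s _ => g s).some_mem
  refine ⟨g, fun a b hab => ?_, fun t => (hg t).1⟩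
  by_contra hne
  rcases lt_or_gt_of_ne hne with h | h
  · exact (hg b).2 ⟨⟨a, h⟩, hab⟩
  · exact (hg a).2 ⟨⟨b, h⟩, hab.symm⟩

theorem exists_injective_forall_mem_of_mk_le {T X : Type u} {κ : Cardinal.{u}} (S : T → Set X)
    (hT : #T ≤ κ) (hS : ∀ t, κ ≤ #(S t)) :
    ∃ g : T → X, Injective g ∧ ∀ t, g t ∈ S t := by
  cases isEmpty_or_nonempty T
  · exact ⟨isEmptyElim, fun a => isEmptyElim a, isEmptyElim⟩
  obtain ⟨e⟩ : Nonempty (T ↪ κ.ord.ToType) := by rwa [← le_def, mk_ord_toType]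
  obtain ⟨g, hg, hgS⟩ := exists_injective_forall_mem_of_lift_mk_Iio_lt (S ∘ invFun e)
    fun t => by simpa using (mk_Iio_lt t (by simp)).trans_le (by simpa using hS _)
  refine ⟨g ∘ e, hg.comp e.injective, fun t => ?_⟩
  simpa [leftInverse_invFun e.injective t] using hgS (e t)

theorem isBreakable_of_injective {K X : Type*} [Nonempty K] {𝓔 : Set (Set X)}
    (g : 𝓔 × K → X) (hg : Injective g) (hmem : ∀ p, g p ∈ (p.1 : Set X)) :
    IsBreakable K 𝓔 := by
  refine ⟨extend g Prod.snd fun _ => Classical.arbitrary K, fun A hA => ?_⟩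
  exact eq_univ_of_forall fun k =>
    ⟨g (⟨A, hA⟩, k), hmem (⟨A, hA⟩, k), hg.extend_apply Prod.snd _ (⟨A, hA⟩, k)⟩

theorem isBreakable_of_mk_le {K X : Type u} (hK : ℵ₀ ≤ #K) (𝓔 : Set (Set X))
    (hcard : #𝓔 ≤ #K) (hbig : ∀ A ∈ 𝓔, #K ≤ #A) : IsBreakable K 𝓔 := by
  have : Nonempty K := mk_ne_zero_iff.1 (aleph0_pos.trans_le hK).ne'
  have hpairs : #(𝓔 × K) ≤ #K :=
    calc #(𝓔 × K) = #𝓔 * #K := (mul_def _ _).symm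
      _ ≤ #K * #K := mul_le_mul_left hcard _
      _ = #K := mul_eq_self hK
  obtain ⟨g, hg, hmem⟩ :=
    exists_injective_forall_mem_of_mk_le (fun p : 𝓔 × K => (p.1 : Set X)) hpairs
      fun p => hbig _ p.1.2
  exact isBreakable_of_injective g hg hmem

/-- Kuratowski Lemma: if `κ` is an infinite cardinal and `𝓔` is a family
of sets with `|𝓔| ≤ κ` and `|A| ≥ κ` for all `A ∈ 𝓔`, then `𝓔` is `κ`-breakable:
there is `f : X → κ` which is surjective onto `κ` on every `A ∈ 𝓔`. -/
theorem stmt9 (κ : Cardinal.{0}) (hκ : ℵ₀ ≤ κ) (X : Type) (𝓔 : Set (Set X))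
    (hcard : #𝓔 ≤ κ) (hbig : ∀ A ∈ 𝓔, κ ≤ #A) :
    ∃ f : X → Quotient.out κ, ∀ A ∈ 𝓔, f '' A = Set.univ := by
  rw [← mk_out κ] at hκ hcard hbig
  exact isBreakable_of_mk_le hκ 𝓔 hcard hbig
end

section
/- If $2^\kappa = \kappa^+$ and $\lambda = \kappa^+$, then $\lambda \times \lambda$ can be partitioned into $\lambda$ many $(\kappa,\lambda)$-thick subsets. -/
/-!
Enumerate all requirements `(M, i)`, with `M` a `κ`-subset of `λ` and `i < λ`, in order type `λ`;
there are only `λ ^ κ = (2 ^ κ) ^ κ = λ` of them. Each column `b < λ` has at most `κ` requirements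
`x ≤ b`, and since each `M` has size `κ` these admit distinct representatives `a_x ∈ M_x`, chosen
by transfinite recursion along a well-order of `{x ≤ b}` whose initial segments have size `< κ`.
Colour the cell `(a_x, b)` by the colour `i_x` of requirement `x`. A set `N` of size `λ` is
cofinal in `λ`, so every requirement `x` lies below some column `b ∈ N`, where the cell
`(a_x, b) ∈ M_x × N` carries colour `i_x`.
-/

open Cardinal Set Function

universe u

theorem exists_injective_mem_of_mk_Iio_lt {γ β : Type u} [LinearOrder γ] [WellFoundedLT γ]
    (M : γ → Set β) (h : ∀ g, #(Iio g) < #(M g)) :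
    ∃ f : γ → β, Injective f ∧ ∀ g, f g ∈ M g := by
  have hfresh (g : γ) (F : Iio g → β) : (M g \ range F).Nonempty :=
    sdiff_nonempty.2 fun hsub => (mk_le_mk_of_subset hsub |>.trans mk_range_le).not_gt (h g)
  let F : γ → β := WellFoundedLT.fix fun g ih => (hfresh g fun y => ih y y.2).some
  have hF (g : γ) : F g ∈ M g \ F '' Iio g := by
    rw [image_eq_range]
    convert (hfresh g fun y => F y).some_mem using 1
    exact WellFoundedLT.fix_eq _ g
  exact ⟨F, .of_lt_imp_ne fun g g' hlt heq => (hF g').2 ⟨g, hlt, heq⟩, fun g => (hF g).1⟩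

theorem exists_injective_mem_of_mk_le {ι β : Type u} (M : ι → Set β)
    (h : ∀ i, #ι ≤ #(M i)) :
    ∃ f : ι → β, Injective f ∧ ∀ i, f i ∈ M i := by
  obtain ⟨_, _, hord⟩ := exists_ord_eq_type_lt ι
  exact exists_injective_mem_of_mk_Iio_lt M fun i => (mk_Iio_lt i hord).trans_le (h i)

theorem exists_thick_coloring_of_surjective {β : Type u} {ι : Type*} [Preorder β]
    {κ : Cardinal.{u}} (hIic : ∀ b : β, #(Iic b) ≤ κ) (φ : β → {M : Set β // #M = κ} × ι)
    (hφ : Surjective φ) :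
    ∃ c : β × β → ι, ∀ M : Set β, #M = κ → ∀ N : Set β, IsCofinal N →
      ∀ i, (c ⁻¹' {i} ∩ M ×ˢ N).Nonempty := by
  choose f hf_inj hf_mem using fun b : β =>
    exists_injective_mem_of_mk_le (fun x : Iic b => ((φ x).1 : Set β))
      fun x => (hIic b).trans_eq (φ x).1.2.symm
  refine ⟨fun p => extend (f p.2) (fun x => (φ x).2) (fun _ => (φ p.2).2) p.1, ?_⟩
  intro M hM N hN i
  obtain ⟨x, hx⟩ := hφ (⟨M, hM⟩, i)
  obtain ⟨b, hbN, hxb⟩ := hN x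
  refine ⟨(f b ⟨x, hxb⟩, b), ?_, ?_, hbN⟩
  · simp [(hf_inj b).extend_apply, hx]
  · simpa [hx] using hf_mem b ⟨x, hxb⟩

theorem isCofinal_of_forall_mk_Iio_lt {α : Type u} [LinearOrder α] {N : Set α}
    (h : ∀ x : α, #(Iio x) < #N) : IsCofinal N := by
  by_contra hN
  obtain ⟨x, hx⟩ := not_isCofinal_iff.1 hN
  exact (mk_le_mk_of_subset hx).not_gt (h x)

theorem mk_setOf_mk_eq_le (α : Type u) (κ : Cardinal.{u}) :
    #{M : Set α // #M = κ} ≤ max #α ℵ₀ ^ κ :=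
  (mk_le_of_injective (Subtype.impEmbedding _ _ fun _ h => h.le).injective).trans
    (mk_bounded_set_le α κ)

/-- if `2^κ = κ⁺` and `λ = κ⁺`, then `λ × λ` can be partitioned into
`λ` many `(κ,λ)`-thick subsets. -/
theorem stmt12 (κ lam : Cardinal.{0}) (hκ : ℵ₀ ≤ κ)
    (hch : 2 ^ κ = Order.succ κ) (hlam : lam = Order.succ κ) :
    ∃ E : (Quotient.out lam) → Set ((Quotient.out lam) × (Quotient.out lam)),
      (⋃ i, E i) = Set.univ ∧ Pairwise (Function.onFun Disjoint E) ∧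
      ∀ i, ∀ M : Set (Quotient.out lam), #M = κ →
        ∀ N : Set (Quotient.out lam), #N = lam →
          (E i ∩ M ×ˢ N).Nonempty := by
  set α := Quotient.out lam
  have hα : #α = lam := mk_out lam
  have hκlam : κ < lam := hlam ▸ hch ▸ cantor κ
  have hlam_inf : ℵ₀ ≤ lam := hκ.trans hκlam.le
  obtain ⟨_, _, hord⟩ := exists_ord_eq_type_lt α
  have hIic (b : α) : #(Iic b) ≤ κ :=
    Order.lt_succ_iff.mp (hlam ▸ hα ▸ mk_Iic_lt b hord (hα ▸ hlam_inf))
  have hpow : lam ^ κ = lam := by rw [hlam, ← hch, ← power_mul, mul_eq_self hκ]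
  have hreq : #({M : Set α // #M = κ} × α) ≤ #α := by
    calc #({M : Set α // #M = κ} × α) ≤ max #α ℵ₀ ^ κ * #α := by
          rw [mk_prod, lift_id, lift_id]; gcongr; exact mk_setOf_mk_eq_le α κ
      _ = #α := by rw [hα, max_eq_left hlam_inf, hpow, mul_eq_self hlam_inf]
  obtain ⟨M₀, hM₀⟩ := le_mk_iff_exists_set.1 (hα ▸ hκlam.le)
  obtain ⟨φ, hφ⟩ : ∃ φ : α → {M : Set α // #M = κ} × α, Surjective φ :=
    exists_surjective_iff.2 ⟨⟨fun a => (⟨M₀, hM₀⟩, a)⟩, le_def _ _ |>.1 hreq⟩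
  obtain ⟨c, hc⟩ := exists_thick_coloring_of_surjective hIic φ hφ
  refine ⟨fun i => c ⁻¹' {i}, ?_, pairwise_disjoint_fiber c, fun i M hM N hN => ?_⟩
  · rw [← preimage_iUnion, iUnion_of_singleton, preimage_univ]
  · exact hc M hM N (isCofinal_of_forall_mk_Iio_lt fun x => hN ▸ hα ▸ mk_Iio_lt x hord) i
end

section
/- If $2^\kappa = \kappa^+$ and $\lambda = \kappa^+$, then $\kappa \times \lambda$ can be partitioned into $\lambda$ many thick subsets, where thick means $(\kappa,\lambda)$-thick. -/
/-!
Enumerate the `κ`-sized subsets of `κ` as `(M α)_{α < κ⁺}`, using `2 ^ κ = κ⁺`. For each column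
`β < κ⁺` there are at most `κ` pairs `(i, α)` with `i, α < β`, so a transfinite recursion picks
distinct points `x_{i,α} ∈ M α`; colour column `β` by `x_{i,α} ↦ i`. A set `N` of size `κ⁺` is
unbounded in `κ⁺`, so it contains a column `β` above both `i` and `α`, where `M α × N` meets
colour `i`.
-/

open Cardinal Set Function

universe u

theorem exists_injective_mem_of_mk_Iio_lt_s13 {ι A : Type u} [LinearOrder ι] [WellFoundedLT ι]
    (S : ι → Set A) (hS : ∀ i, #(Iio i) < #(S i)) :
    ∃ m : ι → A, Injective m ∧ ∀ i, m i ∈ S i := by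
  have fresh : ∀ i (f : Iio i → A), (S i \ range f).Nonempty := fun i f =>
    Set.sdiff_nonempty.mpr fun hsub => (mk_le_mk_of_subset hsub |>.trans mk_range_le).not_gt (hS i)
  let m : ι → A := wellFounded_lt.fix fun i rec => (fresh i fun j => rec j j.2).some
  have hm : ∀ i, m i ∈ S i \ range fun j : Iio i => m j := fun i => by
    have hfix : m i = (fresh i fun j => m j).some := wellFounded_lt.fix_eq _ i
    exact hfix ▸ (fresh i _).some_mem
  refine ⟨m, fun a b hab => ?_, fun i => (hm i).1⟩
  by_contra hne
  rcases lt_or_gt_of_ne hne with h | h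
  · exact (hm b).2 ⟨⟨a, h⟩, hab⟩
  · exact (hm a).2 ⟨⟨b, h⟩, hab.symm⟩

theorem exists_injective_mem_of_mk_le_s13 {ι A : Type u} {κ : Cardinal.{u}} (hι : #ι ≤ κ)
    (S : ι → Set A) (hS : ∀ i, κ ≤ #(S i)) :
    ∃ m : ι → A, Injective m ∧ ∀ i, m i ∈ S i := by
  obtain ⟨e⟩ : Nonempty (ι ≃ (#ι).ord.ToType) := Cardinal.eq.mp (by simp)
  obtain ⟨m, hm, hmS⟩ := exists_injective_mem_of_mk_Iio_lt_s13 (S ∘ e.symm) fun i =>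
    calc #(Iio i) < #ι := by simpa using mk_Iio_lt i
      _ ≤ #(S (e.symm i)) := hι.trans (hS _)
  exact ⟨m ∘ e, hm.comp e.injective, fun i => by simpa using hmS (e i)⟩

theorem exists_subset_image_of_mk_le {A T : Type u} [Nonempty T] {κ : Cardinal.{u}}
    (hκ : ℵ₀ ≤ κ) {s : Set T} (hs : #s ≤ κ) (M : T → Set A) (hM : ∀ α ∈ s, κ ≤ #(M α)) :
    ∃ g : A → T, ∀ α ∈ s, s ⊆ g '' M α := by
  have hss : #(s ×ˢ s) ≤ κ :=
    calc #(s ×ˢ s) = #s * #s := by simp [mk_congr (Equiv.Set.prod s s)]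
      _ ≤ κ := (mul_le_mul' hs hs).trans (mul_eq_self hκ).le
  obtain ⟨m, hm, hmM⟩ := exists_injective_mem_of_mk_le_s13 hss (fun p => M p.1.2)
    fun p => hM _ (mem_prod.mp p.2).2
  refine ⟨extend m (fun p => p.1.1) fun _ => Classical.arbitrary T, fun α hα i hi => ?_⟩
  exact ⟨m ⟨(i, α), hi, hα⟩, hmM ⟨(i, α), hi, hα⟩, hm.extend_apply _ _ _⟩

theorem exists_mem_gt_of_lt_mk {T : Type u} [LinearOrder T] {κ : Cardinal.{u}} (hκ : ℵ₀ ≤ κ)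
    (hT : ∀ t : T, #(Iio t) ≤ κ) {N : Set T} (hN : κ < #N) (t : T) : ∃ n ∈ N, t < n := by
  by_contra! hbdd
  have hsub : N ⊆ insert t (Iio t) := by
    rw [Iio_insert]; exact hbdd
  refine hN.not_ge ((mk_le_mk_of_subset hsub).trans (mk_insert_le.trans ?_))
  exact (add_le_add_left (hT t) 1).trans (add_one_eq hκ).le

theorem exists_coloring_of_mk_Iio_le {A T : Type u} [LinearOrder T] [Nonempty T]
    {κ : Cardinal.{u}} (hκ : ℵ₀ ≤ κ) (hT : ∀ t : T, #(Iio t) ≤ κ) (M : T → Set A)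
    (hM : ∀ α, κ ≤ #(M α)) :
    ∃ c : A → T → T, ∀ α j (N : Set T), κ < #N → ∃ x ∈ M α, ∃ n ∈ N, c x n = j := by
  choose g hg using fun β => exists_subset_image_of_mk_le hκ (hT β) M fun α _ => hM α
  refine ⟨fun x n => g n x, fun α j N hN => ?_⟩
  obtain ⟨n, hn, hlt⟩ := exists_mem_gt_of_lt_mk hκ hT hN (max α j)
  obtain ⟨x, hx, hxj⟩ :=
    hg n α ((le_max_left α j).trans_lt hlt) ((le_max_right α j).trans_lt hlt)
  exact ⟨x, hx, n, hn, hxj⟩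

/-- if `2^κ = κ⁺` and `λ = κ⁺`, then `κ × λ` can be partitioned into
`λ` many thick (i.e. `(κ,λ)`-thick) subsets. -/
theorem stmt13 (κ lam : Cardinal.{0}) (hκ : ℵ₀ ≤ κ)
    (hch : 2 ^ κ = Order.succ κ) (hlam : lam = Order.succ κ) :
    ∃ E : (Quotient.out lam) → Set ((Quotient.out κ) × (Quotient.out lam)),
      (⋃ i, E i) = Set.univ ∧ Pairwise (Function.onFun Disjoint E) ∧
      ∀ i, ∀ M : Set (Quotient.out κ), #M = κ →
        ∀ N : Set (Quotient.out lam), #N = lam →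
          (E i ∩ M ×ˢ N).Nonempty := by
  set A := κ.out
  set T := lam.ord.ToType
  have hT : ∀ t : T, #(Iio t) ≤ κ := fun t =>
    Order.lt_succ_iff.mp (hlam ▸ by simpa [T] using mk_Iio_lt t)
  obtain ⟨e⟩ : Nonempty (lam.out ≃ T) := Cardinal.eq.mp (by simp [T])
  have : Nonempty T := mk_ne_zero_iff.mp (by simp [T, hlam])
  obtain ⟨M, hM⟩ : ∃ M : T → {M : Set A // #M = κ}, Surjective M := by
    refine exists_surjective_iff.mpr ⟨⟨fun _ => ⟨univ, by simp [A]⟩⟩, ?_⟩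
    rw [← le_def]
    calc #{M : Set A // #M = κ} ≤ #(Set A) := mk_subtype_le _
      _ = #T := by simp [A, T, hch, hlam]
  obtain ⟨c, hc⟩ := exists_coloring_of_mk_Iio_le hκ hT (fun t => (M t).1) fun t => (M t).2.ge
  refine ⟨fun j => (fun p : A × lam.out => e.symm (c p.1 (e p.2))) ⁻¹' {j}, ?_,
    pairwise_disjoint_fiber _, fun j M' hM' N hN => ?_⟩
  · ext p; simp
  obtain ⟨α, hα⟩ := hM ⟨M', hM'⟩
  obtain ⟨x, hx, _, ⟨b, hb, rfl⟩, hxj⟩ := hc α (e j) (e '' N) <| by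
    rw [mk_image_eq e.injective, hN, hlam]; exact Order.lt_succ κ
  rw [hα] at hx
  exact ⟨(x, b), by simp [hxj], hx, hb⟩
end

section
/- If $\mathcal{H}$ is a family of infinite subsets of $\omega$ with $|\mathcal{H}|$ strictly less than the unsplitting number $\mathfrak{r}$, then $\mathcal{H}$ is $\omega$-breakable: there is a function $f : \omega \to \omega$ such that $f[A] = \omega$ for every $A \in \mathcal{H}$. -/
open Cardinal Set

/-- `S` splits `A` if both `A ∩ S` and `A \ S` are infinite. -/
def Splits (S A : Set ℕ) : Prop := (A ∩ S).Infinite ∧ (A \ S).Infinite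

/-- The unsplitting (reaping) number `𝔯`: the least cardinality of a family of infinite
subsets of `ℕ` that no single set splits. -/
noncomputable def reapingNumber : Cardinal.{0} :=
  sInf { c : Cardinal | ∃ R : Set (Set ℕ), (∀ A ∈ R, A.Infinite) ∧
    (∀ S : Set ℕ, ∃ A ∈ R, ¬ Splits S A) ∧ #R = c }

/-- a family of infinite subsets of `ℕ` of cardinality `< 𝔯` is
`ω`-breakable. -/
theorem stmt15 (𝓗 : Set (Set ℕ)) (hinf : ∀ A ∈ 𝓗, A.Infinite)
    (hcard : #𝓗 < reapingNumber) :
    ∃ f : ℕ → ℕ, ∀ A ∈ 𝓗, ∀ n : ℕ, ∃ x ∈ A, f x = n := by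
  classical
  -- Key splitting lemma: any "relativized" family can be split by one set.
  have key : ∀ T : Set ℕ, (∀ A ∈ 𝓗, (A ∩ T).Infinite) →
      ∃ U : Set ℕ, ∀ A ∈ 𝓗, ((A ∩ T) ∩ U).Infinite ∧ ((A ∩ T) \ U).Infinite := by
    intro T hT
    by_contra h
    push_neg at h
    have hr : reapingNumber ≤ #((fun A => A ∩ T) '' 𝓗) := by
      apply csInf_le (OrderBot.bddBelow _)
      refine ⟨(fun A => A ∩ T) '' 𝓗, ?_, ?_, rfl⟩
      · rintro B ⟨A, hA, rfl⟩; exact hT A hA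
      · intro S
        obtain ⟨A, hA, h1⟩ := h S
        refine ⟨A ∩ T, ⟨A, hA, rfl⟩, ?_⟩
        intro hs
        exact absurd (h1 hs.1) hs.2
    have : reapingNumber ≤ #𝓗 := hr.trans (Cardinal.mk_image_le)
    exact absurd hcard (not_lt.2 this)
  choose U hU using key
  set inv : Set ℕ → Prop := fun T => ∀ A ∈ 𝓗, (A ∩ T).Infinite with hinv
  let step : {T // inv T} → {T // inv T} := fun p =>
    ⟨p.1 ∩ U p.1 p.2, fun A hA => by
      have := (hU p.1 p.2 A hA).1
      rwa [Set.inter_assoc] at this⟩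
  let g : ℕ → {T // inv T} := fun n => step^[n] ⟨Set.univ, fun A hA => by
    simpa using hinf A hA⟩
  set S : ℕ → Set ℕ := fun n => (g n).1 with hS
  have hsucc : ∀ n, g (n + 1) = step (g n) := fun n =>
    Function.iterate_succ_apply' step n _
  set P : ℕ → Set ℕ := fun n => S n \ S (n + 1) with hP
  have hsub : ∀ n, S (n + 1) ⊆ S n := by
    intro n
    show (g (n+1)).1 ⊆ (g n).1
    rw [hsucc n]
    exact Set.inter_subset_left
  have hmono : ∀ m n, m ≤ n → S n ⊆ S m := by
    intro m n hmn
    induction n with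
    | zero => cases Nat.le_zero.1 hmn; exact subset_rfl
    | succ k ih =>
      rcases Nat.lt_or_ge m (k+1) with h | h
      · exact (hsub k).trans (ih (Nat.lt_succ_iff.1 h))
      · have : m = k + 1 := le_antisymm (hmn) h
        subst this; exact subset_rfl
  have hpiece : ∀ n, ∀ A ∈ 𝓗, (A ∩ P n).Infinite := by
    intro n A hA
    have h2 := (hU (g n).1 (g n).2 A hA).2
    have heq : A ∩ P n = (A ∩ (g n).1) \ U (g n).1 (g n).2 := by
      show A ∩ ((g n).1 \ (g (n+1)).1) = _
      rw [hsucc n]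
      show A ∩ ((g n).1 \ ((g n).1 ∩ U (g n).1 (g n).2)) = _
      ext x; simp only [Set.mem_inter_iff, Set.mem_diff]; tauto
    rwa [heq]
  -- pieces are disjoint: if m < n, x ∈ P n → x ∉ P m
  have hdisj : ∀ m n, m < n → ∀ x, x ∈ P n → x ∉ P m := by
    intro m n hmn x hxn hxm
    have hx1 : x ∈ S n := hxn.1
    have hx2 : x ∈ S (m + 1) := hmono (m+1) n hmn hx1
    exact hxm.2 hx2
  refine ⟨fun x => if h : ∃ n, x ∈ P n then Nat.find h else 0, ?_⟩
  intro A hA n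
  obtain ⟨x, hx⟩ := (hpiece n A hA).nonempty
  refine ⟨x, hx.1, ?_⟩
  have hex : ∃ m, x ∈ P m := ⟨n, hx.2⟩
  beta_reduce
  rw [dif_pos hex, Nat.find_eq_iff]
  exact ⟨hx.2, fun m hm => hdisj m n hm x hx.2⟩
end

section
/- Assuming $\mathfrak{r} = \mathfrak{c}$: the product $\omega \times \mathrm{cf}(\mathfrak{c})$ can be partitioned into $\omega$ many thick subsets, where a subset $E$ of $\omega \times \mathrm{cf}(\mathfrak{c})$ is thick if it meets $M \times N$ for every infinite $M \subseteq \omega$ and every $N \subseteq \mathrm{cf}(\mathfrak{c})$ of cardinality $\mathrm{cf}(\mathfrak{c})$. -/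
open Cardinal Set

/-- A choice of a set splitting every member of `𝓖` (when one exists). -/
noncomputable def SplitterAux (𝓖 : Set (Set ℕ)) : Set ℕ :=
  Classical.epsilon fun S => ∀ A ∈ 𝓖, Splits S A

/-- Iterated intersections `D k = S 0 ∩ ⋯ ∩ S (k-1)` for the recursive splitting. -/
noncomputable def DD (𝓕 : Set (Set ℕ)) : ℕ → Set ℕ
  | 0 => Set.univ
  | k + 1 => DD 𝓕 k ∩ SplitterAux ((· ∩ DD 𝓕 k) '' 𝓕)

/-- The `k`-th splitting set for the family `𝓕`. -/
noncomputable def SS (𝓕 : Set (Set ℕ)) (k : ℕ) : Set ℕ :=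
  SplitterAux ((· ∩ DD 𝓕 k) '' 𝓕)

/-- Coding function: the least `k` such that `n ∉ S k`. -/
noncomputable def fCode (𝓕 : Set (Set ℕ)) (n : ℕ) : ℕ :=
  sInf {k | n ∉ SS 𝓕 k}

lemma split_exists (hr : reapingNumber = Cardinal.continuum) (𝓖 : Set (Set ℕ))
    (h1 : ∀ A ∈ 𝓖, A.Infinite) (h2 : #𝓖 < Cardinal.continuum) :
    ∀ A ∈ 𝓖, Splits (SplitterAux 𝓖) A := by
  have hex : ∃ S : Set ℕ, ∀ A ∈ 𝓖, Splits S A := by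
    by_contra h
    push_neg at h
    have : Cardinal.continuum ≤ #𝓖 := hr ▸ csInf_le' ⟨𝓖, h1, h, rfl⟩
    exact absurd h2 (not_lt_of_ge this)
  exact Classical.epsilon_spec hex

lemma DD_infinite (hr : reapingNumber = Cardinal.continuum) {𝓕 : Set (Set ℕ)}
    (h1 : ∀ A ∈ 𝓕, A.Infinite) (h2 : #𝓕 < Cardinal.continuum) :
    ∀ k, ∀ M ∈ 𝓕, ((M ∩ DD 𝓕 k) ∩ SS 𝓕 k).Infinite ∧ ((M ∩ DD 𝓕 k) \ SS 𝓕 k).Infinite := by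
  have main : ∀ k, ∀ M ∈ 𝓕, (M ∩ DD 𝓕 k).Infinite := by
    intro k
    induction k with
    | zero => intro M hM; simpa [DD] using h1 M hM
    | succ k ih =>
      intro M hM
      have hg : ∀ A ∈ (· ∩ DD 𝓕 k) '' 𝓕, A.Infinite := by
        rintro A ⟨M', hM', rfl⟩; exact ih M' hM'
      have hc : #((· ∩ DD 𝓕 k) '' 𝓕) < Cardinal.continuum :=
        (Cardinal.mk_image_le).trans_lt h2
      have hs := split_exists hr _ hg hc (M ∩ DD 𝓕 k) ⟨M, hM, rfl⟩
      have : ((M ∩ DD 𝓕 k) ∩ SS 𝓕 k).Infinite := hs.1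
      have heq : M ∩ DD 𝓕 (k + 1) = (M ∩ DD 𝓕 k) ∩ SS 𝓕 k := by
        show M ∩ (DD 𝓕 k ∩ SS 𝓕 k) = _
        rw [Set.inter_assoc]
      rw [heq]
      exact this
  intro k M hM
  have hg : ∀ A ∈ (· ∩ DD 𝓕 k) '' 𝓕, A.Infinite := by
    rintro A ⟨M', hM', rfl⟩; exact main k M' hM'
  have hc : #((· ∩ DD 𝓕 k) '' 𝓕) < Cardinal.continuum :=
    (Cardinal.mk_image_le).trans_lt h2
  exact split_exists hr _ hg hc (M ∩ DD 𝓕 k) ⟨M, hM, rfl⟩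

lemma DD_subset_SS (𝓕 : Set (Set ℕ)) : ∀ i, ∀ j < i, DD 𝓕 i ⊆ SS 𝓕 j := by
  intro i
  induction i with
  | zero => intro j hj; omega
  | succ k ih =>
    intro j hj
    rcases Nat.lt_succ_iff_lt_or_eq.1 hj with h | h
    · exact (Set.inter_subset_left).trans (ih j h)
    · subst h; exact Set.inter_subset_right

lemma fCode_surjOn (hr : reapingNumber = Cardinal.continuum) {𝓕 : Set (Set ℕ)}
    (h1 : ∀ A ∈ 𝓕, A.Infinite) (h2 : #𝓕 < Cardinal.continuum) {M : Set ℕ}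
    (hM : M ∈ 𝓕) (i : ℕ) : ∃ n ∈ M, fCode 𝓕 n = i := by
  obtain ⟨n, hn⟩ := (DD_infinite hr h1 h2 i M hM).2.nonempty
  have hmem : ∀ j < i, n ∈ SS 𝓕 j := fun j hj => DD_subset_SS 𝓕 i j hj hn.1.2
  refine ⟨n, hn.1.1, ?_⟩
  have hne : {k | n ∉ SS 𝓕 k}.Nonempty := ⟨i, hn.2⟩
  refine le_antisymm (Nat.sInf_le hn.2) ?_
  by_contra hlt
  push_neg at hlt
  exact (Nat.sInf_mem hne) (hmem _ hlt)

universe u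

theorem stmt16_aux (hr : reapingNumber = Cardinal.continuum) :
    ∃ E : ℕ → Set (ℕ × (Quotient.out Cardinal.continuum.{u}.ord.cof)),
      (⋃ i, E i) = Set.univ ∧ Pairwise (Function.onFun Disjoint E) ∧
      ∀ i, ∀ M : Set ℕ, M.Infinite →
        ∀ N : Set (Quotient.out Cardinal.continuum.{u}.ord.cof),
          #N = Cardinal.continuum.{u}.ord.cof →
          (E i ∩ M ×ˢ N).Nonempty := by
  classical
  set κ : Cardinal := Cardinal.continuum.{u}.ord.cof with hκ
  haveI : IsWellOrder Cardinal.continuum.{u}.ord.ToType (· < ·) := @isWellOrder_lt _ _ _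
  haveI : IsWellOrder κ.ord.ToType (· < ·) := @isWellOrder_lt _ _ _
  -- equiv between 𝔠.ord.ToType and ULift (Set ℕ)
  obtain ⟨e⟩ : Nonempty (Cardinal.continuum.{u}.ord.ToType ≃ ULift.{u} (Set ℕ)) := by
    apply Cardinal.eq.1
    rw [Cardinal.mk_toType, Cardinal.card_ord, Cardinal.mk_uLift, Cardinal.mk_set,
      Cardinal.mk_nat, Cardinal.two_power_aleph0, Cardinal.lift_continuum]
  -- equiv between the index type and κ.ord.ToType
  obtain ⟨g⟩ : Nonempty ((Quotient.out Cardinal.continuum.{u}.ord.cof) ≃ κ.ord.ToType) := by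
    apply Cardinal.eq.1
    rw [Cardinal.mk_toType, Cardinal.card_ord]
    exact Cardinal.mk_out κ
  obtain ⟨f, hf⟩ := Ordinal.exists_fundamental_sequence Cardinal.continuum.{u}.ord
  set ρ : Set ℕ → Ordinal.{u} := fun M => Ordinal.typein (α := Cardinal.continuum.{u}.ord.ToType)
    (· < ·) (e.symm (ULift.up M)) with hρdef
  have hrank : ∀ α, Ordinal.typein (α := κ.ord.ToType) (· < ·) (g α) < κ.ord :=
    fun α => Ordinal.typein_lt_self _
  set cseq : (Quotient.out Cardinal.continuum.{u}.ord.cof) → Ordinal :=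
    fun α => f _ (hrank α) with hcseq
  have hco : ∀ α, cseq α < Cardinal.continuum.{u}.ord := by
    intro α
    rw [← hf.2.2]
    exact Ordinal.lt_blsub f _ _
  set F : (Quotient.out Cardinal.continuum.{u}.ord.cof) → Set (Set ℕ) :=
    fun α => {M | M.Infinite ∧ ρ M < cseq α} with hF
  have h1 : ∀ α, ∀ A ∈ F α, A.Infinite := fun α A hA => hA.1
  have h2 : ∀ α, #(F α) < Cardinal.continuum := by
    intro α
    have hlt : cseq α < Ordinal.type (α := Cardinal.continuum.{u}.ord.ToType) (· < ·) := by
      rw [Ordinal.type_toType]; exact hco α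
    set x₁ : Cardinal.continuum.{u}.ord.ToType := Ordinal.enum (· < ·) ⟨cseq α, hlt⟩ with hx₁
    have hinj : #(ULift.{u} (F α)) ≤ #(Set.Iio x₁) := by
      apply Cardinal.mk_le_of_injective (f := fun M =>
        (⟨e.symm (ULift.up M.down.1), by
          have h5 : ρ M.down.1 < Ordinal.typein (· < ·) x₁ := by
            rw [hx₁, Ordinal.typein_enum]; exact M.down.2.2
          exact (Ordinal.typein_lt_typein (α := Cardinal.continuum.{u}.ord.ToType) (· < ·)).1 h5⟩ : Set.Iio x₁))
      intro M₁ M₂ h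
      have h6 := congrArg Subtype.val h
      have h7 := e.symm.injective h6
      have h8 : M₁.down.1 = M₂.down.1 := congrArg ULift.down h7
      exact congrArg ULift.up (Subtype.ext h8)
    rw [Cardinal.mk_uLift] at hinj
    have h9 : #(Set.Iio x₁) < Cardinal.continuum := Cardinal.mk_Iio_ord_toType x₁
    have h10 : Cardinal.lift.{u} #(F α) < Cardinal.lift.{u} Cardinal.continuum.{0} := by
      rw [Cardinal.lift_continuum]
      exact hinj.trans_lt h9
    exact Cardinal.lift_lt.1 h10
  refine ⟨fun i => {p | fCode (F p.2) p.1 = i}, ?_, ?_, ?_⟩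
  · ext p
    simp only [Set.mem_iUnion, Set.mem_setOf_eq, Set.mem_univ, iff_true]
    exact ⟨_, rfl⟩
  · intro i j hij
    simp only [Function.onFun, Set.disjoint_left]
    rintro p hp hq
    exact hij (hp.symm.trans hq)
  · intro i M hM N hN
    have hρM : ρ M < Cardinal.continuum.{u}.ord := Ordinal.typein_lt_self _
    rw [← hf.2.2] at hρM
    obtain ⟨i₀, hi₀, hle⟩ := Ordinal.lt_blsub_iff.1 hρM
    have hlim : Order.IsSuccLimit κ.ord :=
      Cardinal.isSuccLimit_ord (Ordinal.aleph0_le_cof.2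
        (Cardinal.isSuccLimit_ord Cardinal.aleph0_le_continuum))
    have hsucc : Order.succ i₀ < Ordinal.type (α := κ.ord.ToType) (· < ·) := by
      rw [Ordinal.type_toType]; exact hlim.succ_lt hi₀
    set x₀ : κ.ord.ToType := Ordinal.enum (· < ·) ⟨Order.succ i₀, hsucc⟩ with hx₀
    set B : Set (Quotient.out Cardinal.continuum.{u}.ord.cof) := {α | ¬ ρ M < cseq α} with hB
    have hBcard : #B < κ := by
      have hinj : #B ≤ #(Set.Iio x₀) := by
        apply Cardinal.mk_le_of_injective (f := fun (α : B) =>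
          (⟨g α.1, by
            have hrle : Ordinal.typein (α := κ.ord.ToType) (· < ·) (g α.1) ≤ i₀ := by
              by_contra hgt
              push_neg at hgt
              exact α.2 (lt_of_le_of_lt hle (hf.2.1 hi₀ (hrank α.1) hgt))
            have h5 : Ordinal.typein (α := κ.ord.ToType) (· < ·) (g α.1) <
                Ordinal.typein (· < ·) x₀ := by
              rw [hx₀, Ordinal.typein_enum]
              exact Order.lt_succ_iff.2 hrle
            exact (Ordinal.typein_lt_typein (α := κ.ord.ToType) (· < ·)).1 h5⟩ : Set.Iio x₀))
        intro α₁ α₂ h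
        have h6 := congrArg Subtype.val h
        exact Subtype.ext (g.injective h6)
      exact hinj.trans_lt (Cardinal.mk_Iio_ord_toType x₀)
    have hNB : ¬ N ⊆ B := by
      intro hsub
      have h7 : #N ≤ #B := Cardinal.mk_le_mk_of_subset hsub
      rw [hN] at h7
      exact absurd hBcard (not_lt_of_ge h7)
    obtain ⟨α, hαN, hαB⟩ := Set.not_subset.1 hNB
    have hMF : M ∈ F α := ⟨hM, not_not.1 hαB⟩
    obtain ⟨n, hnM, hfc⟩ := fCode_surjOn hr (h1 α) (h2 α) hMF i
    exact ⟨(n, α), hfc, hnM, hαN⟩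

/-- assuming `𝔯 = 𝔠`, the product `ω × cf(𝔠)` can be partitioned into
`ω` many thick subsets. -/
theorem stmt16 (hr : reapingNumber = Cardinal.continuum) :
    ∃ E : ℕ → Set (ℕ × (Quotient.out Cardinal.continuum.ord.cof)),
      (⋃ i, E i) = Set.univ ∧ Pairwise (Function.onFun Disjoint E) ∧
      ∀ i, ∀ M : Set ℕ, M.Infinite →
        ∀ N : Set (Quotient.out Cardinal.continuum.ord.cof), #N = Cardinal.continuum.ord.cof →
          (E i ∩ M ×ˢ N).Nonempty :=
  stmt16_aux hr
end

section
/- The product $\omega \times \omega$ cannot be partitioned into 3 thick subsets: for every function $h : \omega \times \omega \to \{0,1,2\}$ there exist infinite sets $M, N \subseteq \omega$ and a color $k \in \{0,1,2\}$ such that $h$ never takes the value $k$ on $M \times N$. -/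
open Set

open Filter

noncomputable section Stmt17Aux

variable (h : ℕ × ℕ → Fin 3)

def s17c (m n : ℕ) : Fin 3 × Fin 3 := (h (m, n), h (n, m))

def s17f (m : ℕ) : Fin 3 × Fin 3 :=
  (((hyperfilter ℕ).map (fun n => s17c h m n)).eq_pure_of_finite).choose

lemma s17f_spec (m : ℕ) : {n | s17c h m n = s17f h m} ∈ hyperfilter ℕ := by
  have hs := (((hyperfilter ℕ).map (fun n => s17c h m n)).eq_pure_of_finite).choose_spec
  have h2 : {s17f h m} ∈ ((hyperfilter ℕ).map (fun n => s17c h m n)) := by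
    rw [hs]; exact rfl
  simpa [Ultrafilter.mem_map, Set.preimage, Set.mem_singleton_iff] using h2

def s17a : Fin 3 × Fin 3 :=
  (((hyperfilter ℕ).map (s17f h)).eq_pure_of_finite).choose

lemma s17a_spec : {m | s17f h m = s17a h} ∈ hyperfilter ℕ := by
  have hs := (((hyperfilter ℕ).map (s17f h)).eq_pure_of_finite).choose_spec
  have h2 : {s17a h} ∈ ((hyperfilter ℕ).map (s17f h)) := by rw [hs]; exact rfl
  simpa [Ultrafilter.mem_map, Set.preimage, Set.mem_singleton_iff] using h2

lemma s17_mem_infinite {s : Set ℕ} (hs : s ∈ hyperfilter ℕ) : s.Infinite := by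
  by_contra hfin
  rw [Set.not_infinite] at hfin
  exact Set.Finite.notMem_hyperfilter hfin hs

lemma s17_Ioi_mem (x : ℕ) : Set.Ioi x ∈ hyperfilter ℕ :=
  mem_hyperfilter_of_finite_compl (by simpa using Set.finite_Iic x)

def s17F : ℕ → Set ℕ
  | 0 => {m | s17f h m = s17a h}
  | n + 1 => s17F n ∩ {k | s17c h (sInf (s17F n)) k = s17a h} ∩ Set.Ioi (sInf (s17F n))

def s17g (n : ℕ) : ℕ := sInf (s17F h n)

lemma s17F_succ_subset (n : ℕ) : s17F h (n + 1) ⊆ s17F h n := fun _ hx => hx.1.1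

lemma s17F_subset_zero (n : ℕ) : s17F h n ⊆ s17F h 0 := by
  induction n with
  | zero => exact subset_rfl
  | succ n ih => exact (s17F_succ_subset h n).trans ih

lemma s17F_mem (n : ℕ) : s17F h n ∈ hyperfilter ℕ := by
  induction n with
  | zero => exact s17a_spec h
  | succ n ih =>
    refine Filter.inter_mem (Filter.inter_mem ih ?_) (s17_Ioi_mem _)
    have h1 : sInf (s17F h n) ∈ s17F h n :=
      Nat.sInf_mem (s17_mem_infinite ih).nonempty
    have h2 : s17f h (sInf (s17F h n)) = s17a h := s17F_subset_zero h n h1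
    have := s17f_spec h (sInf (s17F h n))
    rwa [h2] at this

lemma s17g_mem (n : ℕ) : s17g h n ∈ s17F h n :=
  Nat.sInf_mem (s17_mem_infinite (s17F_mem h n)).nonempty

lemma s17F_subset (m n : ℕ) (hmn : m ≤ n) : s17F h n ⊆ s17F h m := by
  induction hmn with
  | refl => exact subset_rfl
  | step _ ih => exact (s17F_succ_subset h _).trans ih

lemma s17g_strictMono : StrictMono (s17g h) := by
  apply strictMono_nat_of_lt_succ
  intro n
  exact (s17g_mem h (n + 1)).2

lemma s17g_color {i j : ℕ} (hij : i < j) : s17c h (s17g h i) (s17g h j) = s17a h := by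
  have : s17g h j ∈ s17F h (i + 1) := s17F_subset h (i + 1) j hij (s17g_mem h j)
  exact this.1.2

lemma s17_exists_k (x y : Fin 3) : ∃ k : Fin 3, k ≠ x ∧ k ≠ y := by
  revert x y; decide

end Stmt17Aux


/-- `ω × ω` cannot be partitioned into 3 thick subsets: for every
3-coloring `h` of `ω × ω` there are infinite `M, N ⊆ ω` and a color `k` that `h`
never takes on `M × N`. -/
theorem stmt17 (h : ℕ × ℕ → Fin 3) :
    ∃ M N : Set ℕ, M.Infinite ∧ N.Infinite ∧
      ∃ k : Fin 3, ∀ m ∈ M, ∀ n ∈ N, h (m, n) ≠ k := by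
  obtain ⟨k, hk1, hk2⟩ := s17_exists_k (s17a h).1 (s17a h).2
  refine ⟨Set.range (fun i => s17g h (2 * i)), Set.range (fun i => s17g h (2 * i + 1)),
    Set.infinite_range_of_injective (fun a b hab => by
      simpa using (s17g_strictMono h).injective hab),
    Set.infinite_range_of_injective (fun a b hab => by
      simpa using (s17g_strictMono h).injective hab), k, ?_⟩
  rintro m ⟨i, rfl⟩ n ⟨j, rfl⟩
  rcases lt_or_gt_of_ne (show 2 * i ≠ 2 * j + 1 by omega) with hlt | hgt
  · have := s17g_color h hlt
    have h1 : h (s17g h (2 * i), s17g h (2 * j + 1)) = (s17a h).1 := by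
      simpa [s17c, Prod.ext_iff] using congrArg Prod.fst this
    rw [h1]; exact hk1.symm
  · have := s17g_color h hgt
    have h2 : h (s17g h (2 * i), s17g h (2 * j + 1)) = (s17a h).2 := by
      simpa [s17c, Prod.ext_iff] using congrArg Prod.snd this
    rw [h2]; exact hk2.symm
end

section
/- For every function $h : \omega \times \omega \to \{0,1,2\}$ there exist infinite disjoint sets $K, L \subseteq \omega$ and two colors $i, j \in \{0,1,2\}$ such that $h(m,n) \in \{i,j\}$ for all $m \in K$ and $n \in L$. -/
/-!
Fix a nonprincipal ultrafilter `U` on `ℕ`. Each row `c m` of a finite colouring is `U`-almost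
constant, with limit colour `col m`, and `col` is itself constant on a `U`-large set. Picking
`a 0 < a 1 < ⋯` so that each new point lies in the rows of all earlier ones yields an infinite
homogeneous set for ordered pairs (Ramsey's theorem). Applying this to `h (m, n)` and then, along
the resulting sequence, to `h (n, m)` gives `e 0 < e 1 < ⋯` with `h (e p, e q) = i` and
`h (e q, e p) = j` whenever `p < q`; the even- and odd-indexed terms of `e` are then `K` and `L`.
-/

open Set Filter

theorem exists_strictMono_forall_lt_mem {F : Filter ℕ} [F.NeBot] (hF : F ≤ atTop)
    {A : Set ℕ} (hA : A ∈ F) {B : ℕ → Set ℕ} (hB : ∀ m, B m ∈ F) :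
    ∃ a : ℕ → ℕ, StrictMono a ∧ (∀ k, a k ∈ A) ∧ ∀ j k, j < k → a k ∈ B (a j) := by
  let V : ℕ → Set ℕ := fun k =>
    Nat.rec A (fun _ W => W ∩ B (sInf W) ∩ Ioi (sInf W)) k
  have hV_succ : ∀ k, V (k + 1) = V k ∩ B (sInf (V k)) ∩ Ioi (sInf (V k)) := fun _ => rfl
  have hV_mem : ∀ k, V k ∈ F := by
    intro k
    induction k with
    | zero => exact hA
    | succ k ih => exact inter_mem (inter_mem ih (hB _)) (hF (Ioi_mem_atTop _))
  have hV_anti : Antitone V := antitone_nat_of_succ_le fun k => by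
    rw [hV_succ]; exact inter_subset_left.trans inter_subset_left
  set a : ℕ → ℕ := fun k => sInf (V k)
  have ha_mem : ∀ k, a k ∈ V k := fun k => Nat.sInf_mem (nonempty_of_mem (hV_mem k))
  have ha_succ : ∀ j k, j < k → a k ∈ B (a j) ∧ a j < a k := fun j k hjk => by
    have := hV_anti (Nat.succ_le_of_lt hjk) (ha_mem k)
    rw [hV_succ] at this
    exact ⟨this.1.2, this.2⟩
  exact ⟨a, strictMono_nat_of_lt_succ fun k => (ha_succ k _ k.lt_succ_self).2,
    fun k => hV_anti k.zero_le (ha_mem k), fun j k hjk => (ha_succ j k hjk).1⟩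

/-- Infinite Ramsey theorem for pairs, in the form of an increasing homogeneous sequence. -/
theorem exists_strictMono_color_eq {κ : Type*} [Finite κ] (c : ℕ → ℕ → κ) :
    ∃ a : ℕ → ℕ, StrictMono a ∧ ∃ i, ∀ j k, j < k → c (a j) (a k) = i := by
  let U : Ultrafilter ℕ := .of atTop
  have hU : (U : Filter ℕ) ≤ atTop := Ultrafilter.of_le _
  have h_row : ∀ m, ∃ i, ∀ᶠ n in U, c m n = i := fun m =>
    Ultrafilter.eventually_exists_iff.mp (.of_forall fun n => ⟨c m n, rfl⟩)
  choose col h_col using h_row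
  obtain ⟨i, hi⟩ : ∃ i, ∀ᶠ m in U, col m = i :=
    Ultrafilter.eventually_exists_iff.mp (.of_forall fun m => ⟨col m, rfl⟩)
  obtain ⟨a, ha_mono, ha_col, ha_row⟩ := exists_strictMono_forall_lt_mem hU hi h_col
  exact ⟨a, ha_mono, i, fun j k hjk => (ha_row j k hjk).trans (ha_col j)⟩

/-- for every 3-coloring `h` of `ω × ω` there are infinite disjoint
`K, L ⊆ ω` and colors `i, j` with `h(m,n) ∈ {i,j}` for all `m ∈ K`, `n ∈ L`. -/
theorem stmt18 (h : ℕ × ℕ → Fin 3) :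
    ∃ K L : Set ℕ, K.Infinite ∧ L.Infinite ∧ Disjoint K L ∧
      ∃ i j : Fin 3, ∀ m ∈ K, ∀ n ∈ L, h (m, n) = i ∨ h (m, n) = j := by
  obtain ⟨a, ha, i, hi⟩ := exists_strictMono_color_eq fun m n => h (m, n)
  obtain ⟨b, hb, j, hj⟩ := exists_strictMono_color_eq fun p q => h (a q, a p)
  set e := a ∘ b
  have he : StrictMono e := ha.comp hb
  have hinj : ∀ p q, e (2 * p) ≠ e (2 * q + 1) := fun p q heq => by
    have := he.injective heq
    omega
  refine ⟨range fun p => e (2 * p), range fun q => e (2 * q + 1),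
    infinite_range_of_injective (he.injective.comp fun _ _ hpq => by omega),
    infinite_range_of_injective (he.injective.comp fun _ _ hpq => by omega), ?_, i, j, ?_⟩
  · rw [disjoint_left]
    rintro _ ⟨p, rfl⟩ ⟨q, hq⟩
    exact hinj p q hq.symm
  · rintro _ ⟨p, rfl⟩ _ ⟨q, rfl⟩
    rcases lt_or_gt_of_ne (hinj p q) with hlt | hlt
    · exact .inl (hi _ _ (hb (he.lt_iff_lt.mp hlt)))
    · exact .inr (hj _ _ (he.lt_iff_lt.mp hlt))
end

section
/- Under GCH: if $X$ and $Y$ are isodyne topological spaces and $|X| = |Y|$ is a successor cardinal, then the product space $X \times Y$ is maximally resolvable, i.e. $|X|$-resolvable. -/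
open Cardinal Set

lemma exists_coloring {μ : Cardinal.{0}} {X I : Type} [Nonempty I]
    (R : Set ((μ.ord.ToType ↪ X) × I)) (hR : #R ≤ μ) :
    ∃ h : X → I, ∀ r ∈ R, ∃ u, h (r.1 u) = r.2 := by
  classical
  have hQcard : #μ.ord.ToType = μ := mk_ord_toType μ
  rcases R.eq_empty_or_nonempty with hRe | hRne
  · exact ⟨fun _ => Classical.arbitrary I, by simp [hRe]⟩
  haveI : Nonempty R := hRne.to_subtype
  obtain ⟨f⟩ : Nonempty (R ↪ μ.ord.ToType) := by
    rw [← le_def, hQcard]; exact hR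
  set σ : μ.ord.ToType → R := Function.invFun f with hσ
  have hσs : Function.Surjective σ := Function.invFun_surjective f.injective
  have key : ∀ (j : μ.ord.ToType) (prev : ∀ i, i < j → X), ∃ x : X,
      (∃ u, (σ j : (μ.ord.ToType ↪ X) × I).1 u = x) ∧ ∀ i (hi : i < j), x ≠ prev i hi := by
    intro j prev
    by_contra hcon
    push_neg at hcon
    have hsub : Set.range (fun u => ((σ j : (μ.ord.ToType ↪ X) × I).1 u)) ⊆
        Set.range (fun i : Iio j => prev i.1 i.2) := by
      rintro x ⟨u, rfl⟩
      obtain ⟨i, hi, hx⟩ := hcon _ ⟨u, rfl⟩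
      exact ⟨⟨i, hi⟩, hx.symm⟩
    have h1 : #(Set.range fun u => ((σ j : (μ.ord.ToType ↪ X) × I).1 u)) = μ := by
      rw [mk_range_eq _ (σ j : (μ.ord.ToType ↪ X) × I).1.injective, hQcard]
    have h2 : #(Set.range (fun i : Iio j => prev i.1 i.2)) < μ :=
      lt_of_le_of_lt mk_range_le (mk_Iio_ord_toType j)
    have h3 := mk_le_mk_of_subset hsub
    rw [h1] at h3
    exact absurd h3 (not_le.mpr h2)
  have wf : WellFounded ((· < ·) : μ.ord.ToType → μ.ord.ToType → Prop) := wellFounded_lt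
  set pick : μ.ord.ToType → X := wf.fix (fun j ih => Classical.choose (key j ih)) with hpick
  have pick_eq : ∀ j, pick j = Classical.choose (key j (fun i _ => pick i)) := by
    intro j
    rw [hpick]
    exact wf.fix_eq _ j
  have pick_mem : ∀ j, ∃ u, (σ j : (μ.ord.ToType ↪ X) × I).1 u = pick j := by
    intro j; rw [pick_eq j]
    exact (Classical.choose_spec (key j (fun i _ => pick i))).1
  have pick_ne : ∀ j i, i < j → pick j ≠ pick i := by
    intro j i hij
    rw [pick_eq j]
    exact (Classical.choose_spec (key j (fun i _ => pick i))).2 i hij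
  have pick_inj : Function.Injective pick := by
    intro i j hij
    rcases lt_trichotomy i j with h | h | h
    · exact absurd hij.symm (pick_ne j i h)
    · exact h
    · exact absurd hij (pick_ne i j h)
  refine ⟨fun x => if hx : ∃ j, pick j = x
      then (σ (Classical.choose hx) : (μ.ord.ToType ↪ X) × I).2
      else Classical.arbitrary I, ?_⟩
  intro r hr
  obtain ⟨j, hj⟩ := hσs ⟨r, hr⟩
  obtain ⟨u, hu⟩ := pick_mem j
  have hσj : (σ j : (μ.ord.ToType ↪ X) × I) = r := by rw [hj]
  refine ⟨u, ?_⟩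
  have hru : r.1 u = pick j := by rw [← hσj]; exact hu
  rw [hru]
  dsimp only
  have hx : ∃ j', pick j' = pick j := ⟨j, rfl⟩
  rw [dif_pos hx]
  have hcj : Classical.choose hx = j := pick_inj (Classical.choose_spec hx)
  rw [hcj, hσj]
/-- under GCH, if `X` and `Y` are isodyne spaces with `|X| = |Y|` a
successor (isolated) cardinal, then `X × Y` is maximally resolvable, i.e.
`|X|`-resolvable. -/
theorem stmt19
    (gch : ∀ μ : Cardinal.{0}, ℵ₀ ≤ μ → 2 ^ μ = Order.succ μ)
    (X Y : Type) [TopologicalSpace X] [TopologicalSpace Y]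
    (hX : ∀ U : Set X, IsOpen U → U.Nonempty → #U = #X)
    (hY : ∀ V : Set Y, IsOpen V → V.Nonempty → #V = #Y)
    (hXY : #X = #Y)
    (hsucc : ∃ μ : Cardinal.{0}, ℵ₀ ≤ μ ∧ #X = Order.succ μ) :
    ∃ D : (Quotient.out (#X)) → Set (X × Y),
      (⋃ i, D i) = Set.univ ∧ Pairwise (Function.onFun Disjoint D) ∧
      ∀ i, Dense (D i) := by
  classical
  obtain ⟨μ, hμ, hκ⟩ := hsucc
  have hμκ : μ < #X := by rw [hκ]; exact Order.lt_succ μ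
  have hXinf : ℵ₀ ≤ #X := hμ.trans hμκ.le
  have h2μ : (2 : Cardinal) ^ μ = #X := (gch μ hμ).trans hκ.symm
  have hpow : #X ^ μ = #X := by
    calc #X ^ μ = ((2:Cardinal) ^ μ) ^ μ := by rw [h2μ]
      _ = (2:Cardinal) ^ (μ * μ) := (power_mul).symm
      _ = (2:Cardinal) ^ μ := by rw [mul_eq_self hμ]
      _ = #X := h2μ
  -- index type
  have hI : #(Quotient.out (#X)) = #X := mk_out (#X)
  haveI : Nonempty (Quotient.out (#X)) := by
    rw [← mk_ne_zero_iff, hI]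
    exact ne_of_gt (lt_of_lt_of_le aleph0_pos hXinf)
  have hQcard : #μ.ord.ToType = μ := mk_ord_toType μ
  -- the request type
  have hReq : #((μ.ord.ToType ↪ X) × (Quotient.out (#X))) ≤ #X := by
    have h1 : #(μ.ord.ToType ↪ X) ≤ #(μ.ord.ToType → X) :=
      mk_le_of_injective DFunLike.coe_injective
    have h2 : #(μ.ord.ToType → X) = #X ^ μ := by rw [← power_def, hQcard]
    calc #((μ.ord.ToType ↪ X) × (Quotient.out (#X)))
        = #(μ.ord.ToType ↪ X) * #(Quotient.out (#X)) := by
          rw [mk_prod, lift_id, lift_id]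
      _ ≤ #X * #X := by
          apply mul_le_mul'
          · exact h1.trans (le_of_eq (h2.trans hpow))
          · exact le_of_eq hI
      _ = #X := mul_eq_self hXinf
  haveI : Nonempty ((μ.ord.ToType ↪ X) × (Quotient.out (#X))) := by
    constructor
    constructor
    · exact Classical.choice (Cardinal.le_def _ _ |>.mp (by rw [hQcard]; exact hμκ.le))
    · exact Classical.arbitrary _
  -- surjection from the well-ordered copy of Y onto requests
  have hW : #(#X).ord.ToType = #X := mk_ord_toType (#X)
  obtain ⟨g⟩ : Nonempty (((μ.ord.ToType ↪ X) × (Quotient.out (#X))) ↪ (#X).ord.ToType) := by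
    rw [← le_def, hW]; exact hReq
  set e := Function.invFun g with he
  have hes : Function.Surjective e := Function.invFun_surjective g.injective
  obtain ⟨bY⟩ : Nonempty (Y ≃ (#X).ord.ToType) := by
    rw [← Cardinal.eq, ← hXY, hW]
  -- per-column colorings
  have hRy : ∀ y : Y, #(e '' (Iio (bY y))) ≤ μ := by
    intro y
    refine mk_image_le.trans ?_
    exact Order.lt_succ_iff.mp ((mk_Iio_ord_toType (bY y)).trans_le hκ.le)
  choose h hh using fun y : Y =>
    exists_coloring (e '' (Iio (bY y))) (hRy y)
  refine ⟨fun i => {p : X × Y | h p.2 p.1 = i}, ?_, ?_, ?_⟩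
  · ext p
    simp only [mem_iUnion, mem_setOf_eq, mem_univ, iff_true]
    exact ⟨h p.2 p.1, rfl⟩
  · intro i j hij
    rw [Function.onFun, Set.disjoint_left]
    rintro p hpi hpj
    exact hij ((hpi : h p.2 p.1 = i).symm.trans hpj)
  · intro i
    rw [dense_iff_inter_open]
    rintro O hO ⟨⟨x, y⟩, hp⟩
    obtain ⟨U, V, hU, hV, hxU, hyV, hUV⟩ := isOpen_prod_iff.mp hO x y hp
    have hUc : #U = #X := hX U hU ⟨x, hxU⟩
    have hVc : #V = #Y := hY V hV ⟨y, hyV⟩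
    obtain ⟨q0⟩ : Nonempty (μ.ord.ToType ↪ ↥U) := by
      rw [← le_def, hQcard, hUc]; exact hμκ.le
    set q : μ.ord.ToType ↪ X := q0.trans (Function.Embedding.subtype _) with hq
    have hqU : ∀ u, q u ∈ U := fun u => (q0 u).2
    obtain ⟨w₀, hw₀⟩ := hes (q, i)
    -- find y' ∈ V beyond w₀
    have hex : ∃ y' ∈ V, w₀ < bY y' := by
      by_contra hnone
      push_neg at hnone
      have hsub : V ⊆ ⇑bY ⁻¹' (Iic w₀) := fun y' hy' => hnone y' hy'
      have h1 : #V ≤ #(Iic w₀) :=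
        (mk_le_mk_of_subset hsub).trans (mk_preimage_of_injective _ _ bY.injective)
      have h2 : #(Iic w₀) ≤ μ := by
        rw [← Set.Iio_insert]
        refine mk_insert_le.trans ?_
        have h3 : #(Iio w₀) ≤ μ := by
          exact Order.lt_succ_iff.mp ((mk_Iio_ord_toType w₀).trans_le hκ.le)
        calc #(Iio w₀) + 1 ≤ μ + 1 := by exact add_le_add_left h3 1
          _ = μ := add_one_eq hμ
      have : #X ≤ μ := by rw [hXY, ← hVc]; exact h1.trans h2
      exact absurd this (not_le.mpr hμκ)
    obtain ⟨y', hy'V, hy'w⟩ := hex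
    have hmem : (q, i) ∈ e '' (Iio (bY y')) := ⟨w₀, hy'w, hw₀⟩
    obtain ⟨u, hu⟩ := hh y' (q, i) hmem
    refine ⟨(q u, y'), ?_, ?_⟩
    · exact hUV ⟨hqU u, hy'V⟩
    · exact hu
end
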